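/- Let P(t)(z) = z^n + Σ_{j=2}^n (-1)^j a_j(t) z^{n-j} be a curve of monic polynomials with smooth complex-valued coefficients a_j defined on an interval I containing 0 (note a_1 = 0), and let r be a positive integer. If the multiplicity at 0 of a_k is at least k·r for all 2 ≤ k ≤ n, then the multiplicity at 0 of t ↦ Δ̃_k(P(t)) is at least k(k-1)·r for all 2 ≤ k ≤ n, where Δ̃_k is the unique polynomial in the coefficients such that Δ̃_k(P) equals Σ_{i_1<...<i_k} Π_{p<q}(λ_{i_p}-λ_{i_q})^2 for the roots λ_j of P. -/

import Mathlib

open Finset Filter Topology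

/-- The `j`-th elementary symmetric polynomial of `μ_1, …, μ_n` (equal to `0` for `j > n`,
`1` for `j = 0`). -/
noncomputable def esymm (n : ℕ) (mu : Fin n → ℂ) (j : ℕ) : ℂ :=
  ∑ S ∈ Finset.powersetCard j (Finset.univ : Finset (Fin n)), ∏ i ∈ S, mu i

/-- `Δ_k(μ) = ∑_{i_1 < ⋯ < i_k} ∏_{p<q} (μ_{i_p} - μ_{i_q})²`. -/
noncomputable def delta (n k : ℕ) (mu : Fin n → ℂ) : ℂ :=
  ∑ S ∈ Finset.powersetCard k (Finset.univ : Finset (Fin n)),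
    ∏ p ∈ S, ∏ q ∈ S.filter (fun q => p < q), (mu p - mu q) ^ 2

namespace Stmt8Aux

open MvPolynomial

noncomputable def deltaPoly (n k : ℕ) : MvPolynomial (Fin n) ℂ :=
  ∑ S ∈ Finset.powersetCard k (Finset.univ : Finset (Fin n)),
    ∏ p ∈ S, ∏ q ∈ S.filter (fun q => p < q), (X p - X q) ^ 2

lemma eval_deltaPoly (n k : ℕ) (mu : Fin n → ℂ) :
    eval mu (deltaPoly n k) = delta n k mu := by
  simp [deltaPoly, delta]

lemma eval_esymmPoly (n j : ℕ) (mu : Fin n → ℂ) :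
    eval mu (MvPolynomial.esymm (Fin n) ℂ j) = esymm n mu j := by
  simp [MvPolynomial.esymm, _root_.esymm]

lemma two_mul_sum_card {n : ℕ} (S : Finset (Fin n)) :
    2 * (∑ p ∈ S, (S.filter (fun q => p < q)).card) = S.card * (S.card - 1) := by
  have h1 : (∑ p ∈ S, (S.filter (fun q => p < q)).card)
      = ∑ p ∈ S, (S.filter (fun q => q < p)).card := by
    simp_rw [Finset.card_filter]
    exact Finset.sum_comm
  have h2 : ∀ p ∈ S, (S.filter (fun q => p < q)).card + (S.filter (fun q => q < p)).card
      = S.card - 1 := by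
    intro p hp
    have hdis : Disjoint (S.filter (fun q => p < q)) (S.filter (fun q => q < p)) := by
      simp only [Finset.disjoint_left, Finset.mem_filter]
      rintro q ⟨-, h1⟩ ⟨-, h2⟩
      exact absurd h1 (not_lt_of_gt h2)
    have hunion : S.filter (fun q => p < q) ∪ S.filter (fun q => q < p) = S.erase p := by
      ext q
      simp only [Finset.mem_union, Finset.mem_filter, Finset.mem_erase]
      constructor
      · rintro (⟨hq, h⟩ | ⟨hq, h⟩)
        · exact ⟨ne_of_gt h, hq⟩
        · exact ⟨ne_of_lt h, hq⟩
      · rintro ⟨hne, hq⟩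
        rcases lt_or_gt_of_ne hne with h | h
        · exact Or.inr ⟨hq, h⟩
        · exact Or.inl ⟨hq, h⟩
    rw [← Finset.card_union_of_disjoint hdis, hunion, Finset.card_erase_of_mem hp]
  calc 2 * (∑ p ∈ S, (S.filter (fun q => p < q)).card)
      = ∑ p ∈ S, ((S.filter (fun q => p < q)).card + (S.filter (fun q => q < p)).card) := by
        rw [Finset.sum_add_distrib, two_mul]
        rw [h1]
    _ = ∑ _p ∈ S, (S.card - 1) := Finset.sum_congr rfl h2
    _ = S.card * (S.card - 1) := by rw [Finset.sum_const, smul_eq_mul]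

lemma delta_smul (n k : ℕ) (c : ℂ) (mu : Fin n → ℂ) :
    delta n k (fun i => c * mu i) = c ^ (k * (k - 1)) * delta n k mu := by
  unfold delta
  rw [Finset.mul_sum]
  refine Finset.sum_congr rfl fun S hS => ?_
  have hcard : S.card = k := (Finset.mem_powersetCard.mp hS).2
  calc ∏ p ∈ S, ∏ q ∈ S.filter (fun q => p < q), (c * mu p - c * mu q) ^ 2
      = ∏ p ∈ S, ((c ^ 2) ^ (S.filter (fun q => p < q)).card
          * ∏ q ∈ S.filter (fun q => p < q), (mu p - mu q) ^ 2) := by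
        refine Finset.prod_congr rfl fun p _ => ?_
        rw [← Finset.prod_const, ← Finset.prod_mul_distrib]
        exact Finset.prod_congr rfl fun q _ => by ring
    _ = (c ^ 2) ^ (∑ p ∈ S, (S.filter (fun q => p < q)).card)
          * ∏ p ∈ S, ∏ q ∈ S.filter (fun q => p < q), (mu p - mu q) ^ 2 := by
        rw [Finset.prod_mul_distrib, Finset.prod_pow_eq_pow_sum]
    _ = c ^ (k * (k - 1)) * ∏ p ∈ S, ∏ q ∈ S.filter (fun q => p < q), (mu p - mu q) ^ 2 := by
        rw [← pow_mul, two_mul_sum_card S, hcard]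

lemma prod_filter_lt_product {n : ℕ} (U : Finset (Fin n)) (f : Fin n → Fin n → ℂ) :
    ∏ w ∈ (U ×ˢ U).filter (fun w => w.1 < w.2), f w.1 w.2
      = ∏ p ∈ U, ∏ q ∈ U.filter (fun q => p < q), f p q := by
  rw [Finset.prod_filter]
  rw [Finset.prod_product' (f := fun p q => if p < q then f p q else 1)]
  exact Finset.prod_congr rfl fun p _ => (Finset.prod_filter _ _).symm

lemma offDiag_prod_eq {n : ℕ} (U : Finset (Fin n)) (z : Fin n → ℂ) :
    ∏ w ∈ U.offDiag, (z w.1 - z w.2)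
      = (-1 : ℂ) ^ (∑ p ∈ U, (U.filter (fun q => p < q)).card)
        * ∏ p ∈ U, ∏ q ∈ U.filter (fun q => p < q), (z p - z q) ^ 2 := by
  have hsplit : U.offDiag
      = (U ×ˢ U).filter (fun w => w.1 < w.2) ∪ (U ×ˢ U).filter (fun w => w.2 < w.1) := by
    ext w
    simp only [Finset.mem_offDiag, Finset.mem_union, Finset.mem_filter, Finset.mem_product]
    constructor
    · rintro ⟨h1, h2, h3⟩
      rcases lt_or_gt_of_ne h3 with h | h
      · exact Or.inl ⟨⟨h1, h2⟩, h⟩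
      · exact Or.inr ⟨⟨h1, h2⟩, h⟩
    · rintro (⟨⟨h1, h2⟩, h⟩ | ⟨⟨h1, h2⟩, h⟩)
      · exact ⟨h1, h2, ne_of_lt h⟩
      · exact ⟨h1, h2, ne_of_gt h⟩
  have hdisj : Disjoint ((U ×ˢ U).filter (fun w => w.1 < w.2))
      ((U ×ˢ U).filter (fun w => w.2 < w.1)) := by
    simp only [Finset.disjoint_left, Finset.mem_filter]
    rintro w ⟨-, h1⟩ ⟨-, h2⟩
    exact absurd h1 (not_lt_of_gt h2)
  have hswap : ∏ w ∈ (U ×ˢ U).filter (fun w => w.2 < w.1), (z w.1 - z w.2)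
      = ∏ w ∈ (U ×ˢ U).filter (fun w => w.1 < w.2), (z w.2 - z w.1) := by
    refine Finset.prod_nbij' (fun w => (w.2, w.1)) (fun w => (w.2, w.1)) ?_ ?_ ?_ ?_ ?_
    · intro w hw
      simp only [Finset.mem_filter, Finset.mem_product] at hw ⊢
      exact ⟨⟨hw.1.2, hw.1.1⟩, hw.2⟩
    · intro w hw
      simp only [Finset.mem_filter, Finset.mem_product] at hw ⊢
      exact ⟨⟨hw.1.2, hw.1.1⟩, hw.2⟩
    · intro w _; rfl
    · intro w _; rfl
    · intro w _; rfl
  rw [hsplit, Finset.prod_union hdisj, hswap,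
    prod_filter_lt_product U (fun p q => z p - z q),
    prod_filter_lt_product U (fun p q => z q - z p),
    ← Finset.prod_mul_distrib]
  calc ∏ p ∈ U, ((∏ q ∈ U.filter (fun q => p < q), (z p - z q))
        * ∏ q ∈ U.filter (fun q => p < q), (z q - z p))
      = ∏ p ∈ U, ((-1 : ℂ) ^ (U.filter (fun q => p < q)).card
          * ∏ q ∈ U.filter (fun q => p < q), (z p - z q) ^ 2) := by
        refine Finset.prod_congr rfl fun p _ => ?_
        rw [← Finset.prod_mul_distrib, ← Finset.prod_const, ← Finset.prod_mul_distrib]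
        exact Finset.prod_congr rfl fun q _ => by ring
    _ = _ := by rw [Finset.prod_mul_distrib, Finset.prod_pow_eq_pow_sum]

lemma pairProd_image {n : ℕ} (e : Equiv.Perm (Fin n)) (S : Finset (Fin n)) (y : Fin n → ℂ) :
    ∏ p ∈ (S.image e), ∏ q ∈ (S.image e).filter (fun q => p < q), (y p - y q) ^ 2
      = ∏ p ∈ S, ∏ q ∈ S.filter (fun q => p < q), (y (e p) - y (e q)) ^ 2 := by
  set T := S.image e with hT
  have hcard : T.card = S.card := Finset.card_image_of_injective _ e.injective
  set A := ∑ p ∈ S, (S.filter (fun q => p < q)).card with hA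
  set B := ∑ p ∈ T, (T.filter (fun q => p < q)).card with hB
  have hAB : A = B := by
    have h1 := two_mul_sum_card S
    have h2 := two_mul_sum_card T
    rw [hcard] at h2
    rw [← hA] at h1; rw [← hB] at h2
    omega
  have hG : ∏ w ∈ T.offDiag, (y w.1 - y w.2) = ∏ w ∈ S.offDiag, (y (e w.1) - y (e w.2)) := by
    refine Finset.prod_nbij' (fun w => (e.symm w.1, e.symm w.2)) (fun w => (e w.1, e w.2))
      ?_ ?_ ?_ ?_ ?_
    · intro w hw
      simp only [Finset.mem_offDiag, hT, Finset.mem_image] at hw ⊢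
      obtain ⟨⟨p, hp, hp'⟩, ⟨q, hq, hq'⟩, hne⟩ := hw
      refine ⟨by rw [← hp', Equiv.symm_apply_apply]; exact hp,
              by rw [← hq', Equiv.symm_apply_apply]; exact hq, ?_⟩
      simp only [ne_eq, EmbeddingLike.apply_eq_iff_eq]
      exact fun h => hne (by
        rw [← (Equiv.apply_symm_apply e w.1), ← (Equiv.apply_symm_apply e w.2), h])
    · intro w hw
      simp only [Finset.mem_offDiag, hT, Finset.mem_image] at hw ⊢
      obtain ⟨h1, h2, h3⟩ := hw
      exact ⟨⟨w.1, h1, rfl⟩, ⟨w.2, h2, rfl⟩, by simp [h3]⟩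
    · intro w _; simp
    · intro w _; simp
    · intro w _; simp
  have key1 := offDiag_prod_eq T y
  have key2 := offDiag_prod_eq S (fun i => y (e i))
  rw [hG] at key1
  rw [← hB] at key1
  rw [← hA] at key2
  have hone : ((-1 : ℂ) ^ B) * ((-1 : ℂ) ^ B) = 1 := by
    rw [← pow_add, ← two_mul, pow_mul, neg_one_sq, one_pow]
  calc ∏ p ∈ T, ∏ q ∈ T.filter (fun q => p < q), (y p - y q) ^ 2
      = ((-1 : ℂ) ^ B) * ((-1 : ℂ) ^ B)
          * ∏ p ∈ T, ∏ q ∈ T.filter (fun q => p < q), (y p - y q) ^ 2 := by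
        rw [hone, one_mul]
    _ = ((-1 : ℂ) ^ B) * ∏ w ∈ S.offDiag, (y (e w.1) - y (e w.2)) := by
        rw [mul_assoc, ← key1]
    _ = ((-1 : ℂ) ^ A) * (((-1 : ℂ) ^ A)
          * ∏ p ∈ S, ∏ q ∈ S.filter (fun q => p < q), (y (e p) - y (e q)) ^ 2) := by
        rw [key2, hAB]
    _ = _ := by rw [← mul_assoc, hAB, hone, one_mul]

lemma delta_comp_perm (n k : ℕ) (e : Equiv.Perm (Fin n)) (x : Fin n → ℂ) :
    delta n k (fun i => x (e i)) = delta n k x := by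
  unfold delta
  refine Finset.sum_nbij' (fun S => S.image e) (fun T => T.image e.symm) ?_ ?_ ?_ ?_ ?_
  · intro S hS
    rw [Finset.mem_powersetCard] at hS ⊢
    exact ⟨Finset.subset_univ _, by rw [Finset.card_image_of_injective _ e.injective, hS.2]⟩
  · intro T hT
    rw [Finset.mem_powersetCard] at hT ⊢
    exact ⟨Finset.subset_univ _, by rw [Finset.card_image_of_injective _ e.symm.injective, hT.2]⟩
  · intro S _
    simp [Finset.image_image]
  · intro T _
    simp [Finset.image_image]
  · intro S _
    exact (pairProd_image e S x).symm

lemma deltaPoly_isSymmetric (n k : ℕ) : (deltaPoly n k).IsSymmetric := by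
  intro e
  apply MvPolynomial.funext
  intro x
  rw [MvPolynomial.eval_rename, eval_deltaPoly, eval_deltaPoly]
  exact delta_comp_perm n k e x

lemma esymm_smul (n : ℕ) (c : ℂ) (x : Fin n → ℂ) (j : ℕ) :
    _root_.esymm n (fun i => c * x i) j = c ^ j * _root_.esymm n x j := by
  unfold _root_.esymm
  rw [Finset.mul_sum]
  refine Finset.sum_congr rfl fun S hS => ?_
  rw [Finset.prod_mul_distrib, Finset.prod_const, (Finset.mem_powersetCard.mp hS).2]

end Stmt8Aux

/-- Lemma (⇒ direction): let `P(t)(z) = z^n + ∑_{j=2}^n (-1)^j a_j(t) z^{n-j}` have smooth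
coefficients with `a_1 = 0`, and let `D k` be the polynomial `Δ̃_k` in the coefficients, i.e.
`D k (σ(μ)) = Δ_k(μ)` for all root tuples `μ`.  If `m(a_k) ≥ k·r` for all `2 ≤ k ≤ n`, then
`m(Δ̃_k(P)) ≥ k(k-1)·r` for all `2 ≤ k ≤ n`. -/
theorem stmt8 (n r : ℕ) (hn : 2 ≤ n) (hr : 0 < r)
    (I : Set ℝ) (hI : I ∈ 𝓝 (0 : ℝ))
    (a : ℕ → ℝ → ℂ) (ha1 : ∀ t, a 1 t = 0)
    (hsmooth : ∀ j, 2 ≤ j → j ≤ n → ContDiffOn ℝ (⊤ : ℕ∞) (a j) I)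
    (hroots : ∀ t ∈ I, ∃ mu : Fin n → ℂ, ∀ j, esymm n mu j = a j t)
    (D : ℕ → (ℕ → ℂ) → ℂ)
    (hD : ∀ (k : ℕ) (mu : Fin n → ℂ), D k (fun j => esymm n mu j) = delta n k mu)
    (hmult : ∀ j, 2 ≤ j → j ≤ n →
      ∃ g : ℝ → ℂ, Continuous g ∧ ∀ᶠ t in 𝓝 (0 : ℝ), a j t = t ^ (j * r) * g t) :
    ∀ k, 2 ≤ k → k ≤ n →
      ∃ g : ℝ → ℂ, Continuous g ∧
        ∀ᶠ t in 𝓝 (0 : ℝ), D k (fun j => a j t) = t ^ (k * (k - 1) * r) * g t := by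
  classical
  intro k hk2 hkn
  have hmne : k * (k - 1) * r ≠ 0 := by
    have h1 : 0 < k - 1 := by omega
    exact (Nat.mul_pos (Nat.mul_pos (by omega) h1) hr).ne'
  -- fundamental theorem of symmetric polynomials
  obtain ⟨Q, hQ⟩ := MvPolynomial.esymmAlgHom_surjective (σ := Fin n) (R := ℂ) (n := n)
    (le_of_eq (Fintype.card_fin n))
    ⟨Stmt8Aux.deltaPoly n k,
      (MvPolynomial.mem_symmetricSubalgebra _).mpr (Stmt8Aux.deltaPoly_isSymmetric n k)⟩
  have hQ' : MvPolynomial.aeval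
      (fun i : Fin n => MvPolynomial.esymm (Fin n) ℂ ((i : ℕ) + 1)) Q
      = Stmt8Aux.deltaPoly n k := by
    have h := congrArg Subtype.val hQ
    rwa [MvPolynomial.esymmAlgHom_apply] at h
  have hFid : ∀ ν : Fin n → ℂ,
      MvPolynomial.eval (fun i : Fin n => esymm n ν ((i : ℕ) + 1)) Q = delta n k ν := by
    intro ν
    have h1 := congrArg (MvPolynomial.eval ν) hQ'
    rw [Stmt8Aux.eval_deltaPoly, MvPolynomial.aeval_def, MvPolynomial.algebraMap_eq,
      ← MvPolynomial.eval_assoc] at h1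
    have h2 : (⇑(MvPolynomial.eval ν) ∘ fun i : Fin n => MvPolynomial.esymm (Fin n) ℂ ((i : ℕ) + 1))
        = fun i : Fin n => esymm n ν ((i : ℕ) + 1) := by
      funext i
      exact Stmt8Aux.eval_esymmPoly n _ ν
    rw [h2] at h1
    exact h1
  -- choose the coefficient factorizations
  choose! bg hbgc hbge using hmult
  set b : ℕ → ℝ → ℂ := fun j => if h : 2 ≤ j ∧ j ≤ n then bg j else fun _ => 0 with hbdef
  have hbc : ∀ j, Continuous (b j) := by
    intro j
    rw [hbdef]
    dsimp only
    split_ifs with h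
    · exact hbgc j h.1 h.2
    · exact continuous_const
  have hbe : ∀ j, 2 ≤ j → j ≤ n → ∀ᶠ t in 𝓝 (0 : ℝ), a j t = t ^ (j * r) * b j t := by
    intro j h1 h2
    have h3 := hbge j h1 h2
    rw [hbdef]
    dsimp only
    rw [dif_pos ⟨h1, h2⟩]
    exact h3
  have hb1 : ∀ t, b 1 t = 0 := by
    intro t
    rw [hbdef]
    dsimp only
    rw [dif_neg (by omega)]
  -- define g
  set g : ℝ → ℂ := fun t => MvPolynomial.eval (fun i : Fin n => b ((i : ℕ) + 1) t) Q with hgdef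
  have hgc : Continuous g := by
    exact (MvPolynomial.continuous_eval Q).comp (continuous_pi fun i => hbc _)
  -- eventual facts
  have hIev : ∀ᶠ t in 𝓝 (0 : ℝ), t ∈ I := hI
  have hev : ∀ᶠ t in 𝓝 (0 : ℝ), ∀ j ∈ Finset.Icc 2 n, a j t = t ^ (j * r) * b j t :=
    ((Finset.Icc 2 n).eventually_all).mpr fun j hj =>
      hbe j (Finset.mem_Icc.mp hj).1 (Finset.mem_Icc.mp hj).2
  -- Fa
  set Fa : ℝ → ℂ := fun t => MvPolynomial.eval (fun i : Fin n => a ((i : ℕ) + 1) t) Q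
    with hFadef
  have hAcont : ∀ i : Fin n, ContinuousAt (fun t => a ((i : ℕ) + 1) t) 0 := by
    intro i
    rcases Nat.lt_or_ge ((i : ℕ) + 1) 2 with h | h
    · have h1 : (i : ℕ) + 1 = 1 := by omega
      have h2 : (fun t => a ((i : ℕ) + 1) t) = fun _ => 0 := by
        funext t; rw [h1]; exact ha1 t
      rw [h2]
      exact continuousAt_const
    · have hle : (i : ℕ) + 1 ≤ n := by have := i.isLt; omega
      exact ((hsmooth _ h hle).continuousOn.continuousAt hI)
  have hFacont : ContinuousAt Fa 0 :=
    (MvPolynomial.continuous_eval Q).continuousAt.comp (continuousAt_pi.mpr hAcont)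
  have hDFa : ∀ t ∈ I, D k (fun j => a j t) = Fa t := by
    intro t ht
    obtain ⟨μ, hμ⟩ := hroots t ht
    have h1 : (fun j => a j t) = fun j => esymm n μ j := funext fun j => (hμ j).symm
    rw [h1, hD k μ, ← hFid μ, hFadef]
    dsimp only
    rw [show (fun i : Fin n => esymm n μ ((i : ℕ) + 1)) = fun i : Fin n => a ((i : ℕ) + 1) t
      from funext fun i => hμ _]
  -- the key computation for t ≠ 0
  have hkey : ∀ t : ℝ, t ∈ I → (∀ j ∈ Finset.Icc 2 n, a j t = t ^ (j * r) * b j t) →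
      t ≠ 0 → Fa t = t ^ (k * (k - 1) * r) * g t := by
    intro t ht htev ht0
    obtain ⟨μ, hμ⟩ := hroots t ht
    have htC : ((t : ℂ)) ≠ 0 := by exact_mod_cast ht0
    have htr : ((t : ℂ)) ^ r ≠ 0 := pow_ne_zero _ htC
    set ν : Fin n → ℂ := fun i => μ i / (t : ℂ) ^ r with hν
    have hμν : μ = fun i => (t : ℂ) ^ r * ν i := by
      funext i
      rw [hν]
      field_simp
    have hesymm : ∀ j : ℕ, 1 ≤ j → j ≤ n → esymm n ν j = b j t := by
      intro j hj1 hjn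
      have h1 : esymm n μ j = ((t : ℂ) ^ r) ^ j * esymm n ν j := by
        rw [hμν]
        exact Stmt8Aux.esymm_smul n _ ν j
      rcases eq_or_lt_of_le hj1 with h | h
      · -- j = 1
        rw [← h] at h1 hjn ⊢
        rw [hμ 1, ha1 t, pow_one] at h1
        rw [hb1 t]
        exact (mul_eq_zero.mp h1.symm).resolve_left htr
      · -- 2 ≤ j
        have h2 : a j t = t ^ (j * r) * b j t := htev j (Finset.mem_Icc.mpr ⟨h, hjn⟩)
        rw [hμ j, h2] at h1
        have h3 : ((t : ℂ)) ^ (j * r) = ((t : ℂ) ^ r) ^ j := by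
          rw [← pow_mul, mul_comm]
        rw [h3] at h1
        exact (mul_left_cancel₀ (pow_ne_zero _ htr) h1).symm
    have hc : Fa t = delta n k μ := by
      rw [← hFid μ, hFadef]
      dsimp only
      rw [show (fun i : Fin n => esymm n μ ((i : ℕ) + 1)) = fun i : Fin n => a ((i : ℕ) + 1) t
        from funext fun i => hμ _]
    have hg : MvPolynomial.eval (fun i : Fin n => esymm n ν ((i : ℕ) + 1)) Q = g t := by
      rw [hgdef]
      dsimp only
      rw [show (fun i : Fin n => esymm n ν ((i : ℕ) + 1)) = fun i : Fin n => b ((i : ℕ) + 1) t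
        from funext fun i => hesymm _ (by omega) (by have := i.isLt; omega)]
    rw [hc, hμν, Stmt8Aux.delta_smul n k ((t : ℂ) ^ r) ν, ← hFid ν, hg, ← pow_mul,
      mul_comm r (k * (k - 1))]
  -- value at 0
  have hFa0 : Fa 0 = 0 := by
    have h1 : Filter.Tendsto Fa (𝓝[≠] (0 : ℝ)) (𝓝 (Fa 0)) :=
      hFacont.tendsto.mono_left nhdsWithin_le_nhds
    have h2 : Filter.Tendsto (fun t : ℝ => (t : ℂ) ^ (k * (k - 1) * r) * g t)
        (𝓝 (0 : ℝ)) (𝓝 0) := by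
      have hc : Continuous fun t : ℝ => (t : ℂ) ^ (k * (k - 1) * r) * g t :=
        ((Complex.continuous_ofReal.pow _)).mul hgc
      have h3 := hc.tendsto 0
      simpa [zero_pow hmne] using h3
    have h3 : Fa =ᶠ[𝓝[≠] (0 : ℝ)] fun t : ℝ => (t : ℂ) ^ (k * (k - 1) * r) * g t := by
      have h4 := eventually_nhdsWithin_of_eventually_nhds
        (s := {(0 : ℝ)}ᶜ) (hIev.and hev)
      filter_upwards [h4, self_mem_nhdsWithin] with t h htne
      exact hkey t h.1 h.2 htne
    exact tendsto_nhds_unique h1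
      ((h2.mono_left nhdsWithin_le_nhds).congr' h3.symm)
  -- conclude
  refine ⟨g, hgc, ?_⟩
  filter_upwards [hIev, hev] with t ht htev
  rw [hDFa t ht]
  rcases eq_or_ne t 0 with rfl | ht0
  · rw [hFa0]
    simp [zero_pow hmne]
  · exact hkey t ht htev ht0
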